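/- arXiv:2602.12699 — 9 statements merged into one kernel-verified Lean document; each statement's English description precedes it below -/
import Mathlib

section
/- Let C be a closed bounded convex subset of a Banach space X. Then the set of semi PC points of C is norm closed and contains the norm closure of the set of PC points of C. -/
variable {X : Type*} [NormedAddCommGroup X] [NormedSpace ℝ X]

/-- The weak topology on a normed space `X`. -/
noncomputable def weakTop (X : Type*) [NormedAddCommGroup X] [NormedSpace ℝ X] :
    TopologicalSpace X :=
  TopologicalSpace.induced (fun (z : X) (f : X →L[ℝ] ℝ) => f z) inferInstance

/-- The set of PC (point of continuity) points of `C`: points `x ∈ C` such that for every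
`ε > 0` some nonempty relatively weakly open subset of `C` contains `x` and is contained in
`B(x, ε)`. -/
def pcPoints (C : Set X) : Set X :=
  {x ∈ C | ∀ ε > (0 : ℝ), ∃ U : Set X, (weakTop X).IsOpen U ∧ x ∈ U ∧
    U ∩ C ⊆ Metric.closedBall x ε}

/-- The set of semi PC points of `C`: points `x ∈ C` such that for every `ε > 0` some
nonempty relatively weakly open subset of `C` is contained in `B(x, ε)`. -/
def semiPCPoints (C : Set X) : Set X :=
  {x ∈ C | ∀ ε > (0 : ℝ), ∃ U : Set X, (weakTop X).IsOpen U ∧ (U ∩ C).Nonempty ∧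
    U ∩ C ⊆ Metric.closedBall x ε}

/-- For a closed bounded convex subset `C` of a Banach space `X`, the set of semi PC points
of `C` is norm closed and contains the norm closure of the set of PC points. -/
theorem semiPCPoints_isClosed_and_closure_pcPoints_subset
    [CompleteSpace X] (C : Set X) (hC : IsClosed C) (hb : Bornology.IsBounded C)
    (hconv : Convex ℝ C) :
    IsClosed (semiPCPoints C) ∧ closure (pcPoints C) ⊆ semiPCPoints C := by
  have hclosed : IsClosed (semiPCPoints C) := by
    refine isClosed_of_closure_subset fun x hxc => ?_
    constructor
    · have : semiPCPoints C ⊆ C := fun y hy => hy.1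
      exact hC.closure_subset_iff.mpr this hxc
    · intro ε hε
      obtain ⟨y, hy, hdy⟩ := Metric.mem_closure_iff.mp hxc (ε / 2) (by linarith)
      obtain ⟨U, hU, hne, hsub⟩ := hy.2 (ε / 2) (by linarith)
      refine ⟨U, hU, hne, fun z hz => ?_⟩
      have h1 : dist z y ≤ ε / 2 := hsub hz
      have : dist z x ≤ dist z y + dist y x := dist_triangle z y x
      rw [Metric.mem_closedBall]
      rw [dist_comm] at hdy
      linarith
  refine ⟨hclosed, ?_⟩
  have hsub : pcPoints C ⊆ semiPCPoints C := by
    rintro y ⟨hyC, hy⟩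
    refine ⟨hyC, fun ε hε => ?_⟩
    obtain ⟨U, hU, hyU, hUb⟩ := hy ε hε
    exact ⟨U, hU, ⟨y, hyU, hyC⟩, hUb⟩
  exact hclosed.closure_subset_iff.mpr hsub
end

section
/- Let X be a Banach space with the Radon–Nikodým property and C a closed bounded convex subset of X. Then the set of semi denting points of C equals the norm closure of the set of denting points of C. -/
variable {X : Type*} [NormedAddCommGroup X] [NormedSpace ℝ X]

/-- The slice of a set `C` determined by `f` and `δ`:
`S(C, f, δ) = {z ∈ C : f z > sup f(C) - δ}`. -/
def sliceOf (C : Set X) (f : X →L[ℝ] ℝ) (δ : ℝ) : Set X :=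
  {z ∈ C | f z > sSup (f '' C) - δ}

/-- The set of denting points of `C`: points `x ∈ C` such that for every `ε > 0` some
slice of `C` contains `x` and is contained in `B(x, ε)`. -/
def dentingPoints (C : Set X) : Set X :=
  {x ∈ C | ∀ ε > (0 : ℝ), ∃ (f : X →L[ℝ] ℝ) (δ : ℝ), 0 < δ ∧
    x ∈ sliceOf C f δ ∧ sliceOf C f δ ⊆ Metric.closedBall x ε}

/-- The set of semi denting points of `C`: points `x ∈ C` such that for every `ε > 0` some
slice of `C` is contained in `B(x, ε)`. -/
def semiDentingPoints (C : Set X) : Set X :=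
  {x ∈ C | ∀ ε > (0 : ℝ), ∃ (f : X →L[ℝ] ℝ) (δ : ℝ), 0 < δ ∧
    sliceOf C f δ ⊆ Metric.closedBall x ε}


/-- If `X` is a Banach space with the Radon–Nikodým property (formulated through its geometric
characterization: every closed bounded convex subset is the closed convex hull of its denting
points), then for every closed bounded convex subset `C` of `X` the set of semi denting points
of `C` equals the norm closure of the set of denting points of `C`. -/
theorem semiDentingPoints_eq_closure_dentingPoints_of_RNP
    [CompleteSpace X]
    (hRNP : ∀ D : Set X, IsClosed D → Bornology.IsBounded D → Convex ℝ D →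
      D = closure (convexHull ℝ (dentingPoints D)))
    (C : Set X) (hC : IsClosed C) (hb : Bornology.IsBounded C) (hconv : Convex ℝ C) :
    semiDentingPoints C = closure (dentingPoints C) := by
  have hDC : dentingPoints C ⊆ C := fun y hy => hy.1
  apply Set.Subset.antisymm
  · -- semi denting ⊆ closure of denting
    rintro x ⟨hxC, hx⟩
    rw [Metric.mem_closure_iff]
    intro ε hε
    obtain ⟨f, δ, hδ, hslice⟩ := hx (ε / 2) (by linarith)
    -- the slice contains a denting point
    have hbdd : BddAbove (f '' C) := by
      have : Bornology.IsBounded (f '' C) := f.lipschitz.isBounded_image hb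
      exact this.bddAbove
    have hne : (f '' C).Nonempty := ⟨f x, ⟨x, hxC, rfl⟩⟩
    obtain ⟨y, hy, hylt⟩ := exists_lt_of_lt_csSup hne (show sSup (f '' C) - δ < sSup (f '' C) by linarith)
    obtain ⟨z, hzC, rfl⟩ := hy
    by_cases hd : ∃ d ∈ dentingPoints C, sSup (f '' C) - δ < f d
    · obtain ⟨d, hdD, hdlt⟩ := hd
      have hdS : d ∈ sliceOf C f δ := ⟨hDC hdD, hdlt⟩
      have := hslice hdS
      rw [Metric.mem_closedBall] at this
      exact ⟨d, hdD, by rw [dist_comm] at this; linarith [dist_comm x d ▸ this]⟩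
    · exfalso
      push_neg at hd
      -- all denting points have f ≤ sSup - δ, hence so does all of C
      have hsub : dentingPoints C ⊆ {w : X | f w ≤ sSup (f '' C) - δ} := fun w hw => hd w hw
      have hconvset : Convex ℝ {w : X | f w ≤ sSup (f '' C) - δ} :=
        convex_halfSpace_le (f.toLinearMap.isLinear) _
      have hclset : IsClosed {w : X | f w ≤ sSup (f '' C) - δ} :=
        isClosed_le f.continuous continuous_const
      have h1 : convexHull ℝ (dentingPoints C) ⊆ {w : X | f w ≤ sSup (f '' C) - δ} :=
        convexHull_min hsub hconvset
      have h2 : closure (convexHull ℝ (dentingPoints C)) ⊆ {w : X | f w ≤ sSup (f '' C) - δ} :=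
        hclset.closure_subset_iff.mpr h1
      have hzmem : z ∈ closure (convexHull ℝ (dentingPoints C)) := by
        rw [← hRNP C hC hb hconv]; exact hzC
      have := h2 hzmem
      simp only [Set.mem_setOf_eq] at this
      linarith
  · -- closure of denting ⊆ semi denting
    intro x hx
    have hxC : x ∈ C := hC.closure_subset_iff.mpr hDC hx
    refine ⟨hxC, fun ε hε => ?_⟩
    rw [Metric.mem_closure_iff] at hx
    obtain ⟨d, hd, hdist⟩ := hx (ε / 2) (by linarith)
    obtain ⟨f, δ, hδ, _, hsub⟩ := hd.2 (ε / 2) (by linarith)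
    refine ⟨f, δ, hδ, fun w hw => ?_⟩
    have := hsub hw
    rw [Metric.mem_closedBall] at this ⊢
    calc dist w x ≤ dist w d + dist d x := dist_triangle _ _ _
      _ ≤ ε / 2 + ε / 2 := add_le_add this (le_of_lt (by rwa [dist_comm] at hdist))
      _ = ε := by ring
end

section
/- Let X be a two-dimensional Banach space and C a closed bounded convex subset of X. Then every semi denting point of C is a denting point of C. -/
variable {X : Type*} [NormedAddCommGroup X] [NormedSpace ℝ X]

/-!
Every slice of a compact set contains an extreme point (an extreme point of the face on which
the defining functional is maximal), so a semi denting point is a limit of extreme points.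

In the plane the extreme points of a closed convex set `C` form a closed set. If `x` lies in an
open segment `(a, b) ⊆ C`, take `f` whose kernel is the direction of `b - a`. A point of `C` near
`x` on the line `f = f x` lies in `(a, b)`; a point `e` near `x` with `f e > f x` lies in an open
segment from a point `w ∈ C` with `f w > f x` to a point of `(a, b)`; the side `f < f x` is
symmetric. Hence no extreme point of `C` is close to `x`.

Finally an extreme point `x` of a compact convex set is denting (Choquet): cover
`C \ B(x, ε)` by finitely many convex pieces `C ∩ B̄(y, ε / 2)`; their convex hull is compact and
misses `x`, and a functional strictly separating `x` from it cuts off the required slice.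
-/

open Set Metric Filter Topology Module

section Compactness

variable {E : Type*} [AddCommGroup E] [Module ℝ E] [TopologicalSpace E]
  [IsTopologicalAddGroup E] [ContinuousSMul ℝ E] {s t : Set E}

theorem IsCompact.convexJoin (hs : IsCompact s) (ht : IsCompact t) :
    IsCompact (convexJoin ℝ s t) := by
  have : _root_.convexJoin ℝ s t =
      (fun p : E × E × ℝ => p.1 + p.2.2 • (p.2.1 - p.1)) '' s ×ˢ t ×ˢ Icc 0 1 := by
    ext x
    simp only [mem_convexJoin, segment_eq_image', mem_image]
    constructor
    · rintro ⟨a, ha, b, hb, θ, hθ, rfl⟩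
      exact ⟨(a, b, θ), ⟨ha, hb, hθ⟩, rfl⟩
    · rintro ⟨⟨a, b, θ⟩, ⟨ha, hb, hθ⟩, rfl⟩
      exact ⟨a, ha, b, hb, θ, hθ, rfl⟩
  rw [this]
  exact (hs.prod (ht.prod isCompact_Icc)).image (by fun_prop)

theorem IsCompact.convexHull_union (hs : IsCompact (convexHull ℝ s))
    (ht : IsCompact (convexHull ℝ t)) : IsCompact (convexHull ℝ (s ∪ t)) := by
  rcases s.eq_empty_or_nonempty with rfl | hs₀
  · simpa using ht
  rcases t.eq_empty_or_nonempty with rfl | ht₀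
  · simpa using hs
  rw [_root_.convexHull_union hs₀ ht₀]
  exact hs.convexJoin ht

theorem Set.Finite.isCompact_convexHull_biUnion {ι : Type*} {I : Set ι} {K : ι → Set E}
    (hI : I.Finite) (hK : ∀ i ∈ I, IsCompact (convexHull ℝ (K i))) :
    IsCompact (convexHull ℝ (⋃ i ∈ I, K i)) := by
  induction I, hI using Set.Finite.induction_on with
  | empty => simp
  | @insert i I _ _ ih =>
    rw [biUnion_insert]
    exact (hK i (mem_insert i I)).convexHull_union
      (ih fun j hj => hK j (mem_insert_of_mem i hj))

end Compactness

section Extreme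

variable {E : Type*} [AddCommGroup E] [Module ℝ E] {A S : Set E} {x a b : E}

theorem notMem_openSegment_of_mem_extremePoints (hx : x ∈ A.extremePoints ℝ) (ha : a ∈ A)
    (hb : b ∈ A) (hab : a ≠ b) : x ∉ openSegment ℝ a b := fun h =>
  have ⟨hax, hbx⟩ := (mem_extremePoints.1 hx).2 a ha b hb h
  hab (hax.trans hbx.symm)

theorem notMem_convexHull_of_mem_extremePoints (hA : Convex ℝ A) (hx : x ∈ A.extremePoints ℝ)
    (hSA : S ⊆ A) (hxS : x ∉ S) : x ∉ convexHull ℝ S := fun h =>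
  hxS <| extremePoints_convexHull_subset <|
    inter_extremePoints_subset_extremePoints_of_subset (convexHull_min hSA hA) ⟨h, hx⟩

end Extreme

theorem exists_mem_extremePoints_mem_sliceOf {C : Set X} (hC : IsCompact C) (hne : C.Nonempty)
    (f : X →L[ℝ] ℝ) {δ : ℝ} (hδ : 0 < δ) : ∃ e ∈ C.extremePoints ℝ, e ∈ sliceOf C f δ := by
  have hF : IsExposed ℝ C {z ∈ C | ∀ w ∈ C, f w ≤ f z} := fun _ => ⟨f, rfl⟩
  obtain ⟨y, hyC, hymax⟩ := hC.exists_isMaxOn hne f.continuous.continuousOn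
  obtain ⟨e, he⟩ := (hF.isCompact hC).extremePoints_nonempty ⟨y, hyC, hymax⟩
  have hsup : sSup (f '' C) ≤ f e := csSup_le (hne.image f) (forall_mem_image.2 he.1.2)
  exact ⟨e, hF.isExtreme.extremePoints_subset_extremePoints he, he.1.1, by linarith⟩

theorem semiDentingPoints_subset_closure_extremePoints {C : Set X} (hC : IsCompact C) :
    semiDentingPoints C ⊆ closure (C.extremePoints ℝ) := by
  intro x hx
  refine Metric.mem_closure_iff.2 fun ε hε => ?_
  obtain ⟨f, δ, hδ, hslice⟩ := hx.2 (ε / 2) (half_pos hε)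
  obtain ⟨e, he, hes⟩ := exists_mem_extremePoints_mem_sliceOf hC ⟨x, hx.1⟩ f hδ
  exact ⟨e, he, (mem_closedBall'.1 (hslice hes)).trans_lt (half_lt_self hε)⟩

theorem mem_dentingPoints_of_mem_extremePoints {C : Set X} (hC : IsCompact C)
    (hconv : Convex ℝ C) {x : X} (hx : x ∈ C.extremePoints ℝ) : x ∈ dentingPoints C := by
  refine ⟨hx.1, fun ε hε => ?_⟩
  obtain ⟨t, htK, htfin, hcover⟩ := (hC.diff (isOpen_ball (x := x) (ε := ε))).finite_cover_balls
    (half_pos hε)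
  set D := convexHull ℝ (⋃ y ∈ t, C ∩ closedBall y (ε / 2))
  have hDcomp : IsCompact D := htfin.isCompact_convexHull_biUnion fun y _ => by
    rw [(hconv.inter (convex_closedBall y _)).convexHull_eq]
    exact hC.inter_right isClosed_closedBall
  have hxD : x ∉ D := by
    refine notMem_convexHull_of_mem_extremePoints hconv hx
      (iUnion₂_subset fun _ _ => inter_subset_left) ?_
    simp only [mem_iUnion, mem_inter_iff, mem_closedBall, not_exists, not_and]
    exact fun y hy _ hxy => (htK hy).2 (mem_ball'.2 (hxy.trans_lt (half_lt_self hε)))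
  obtain ⟨f, u, hfD, hux⟩ :=
    geometric_hahn_banach_closed_point (convex_convexHull ℝ _) hDcomp.isClosed hxD
  have hfx : f x ≤ sSup (f '' C) :=
    le_csSup (hC.image f.continuous).bddAbove (mem_image_of_mem f hx.1)
  refine ⟨f, sSup (f '' C) - u, by linarith, ⟨hx.1, by linarith⟩, fun z hz => ?_⟩
  by_contra hzx
  obtain ⟨y, hy, hzy⟩ := mem_iUnion₂.1 (hcover ⟨hz.1, fun h => hzx (ball_subset_closedBall h)⟩)
  have hzD : z ∈ D := subset_convexHull ℝ _ (mem_biUnion hy ⟨hz.1, ball_subset_closedBall hzy⟩)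
  linarith [hfD z hzD, hz.2]

theorem eventually_mem_openSegment_of_sub_mem_span {a b x : X} (hab : a ≠ b)
    (hx : x ∈ openSegment ℝ a b) :
    ∀ᶠ z in 𝓝 x, z - x ∈ ℝ ∙ (b - a) → z ∈ openSegment ℝ a b := by
  rw [openSegment_eq_image'] at hx
  obtain ⟨t, ⟨ht0, ht1⟩, rfl⟩ := hx
  have hba : 0 < ‖b - a‖ := norm_pos_iff.2 (sub_ne_zero.2 hab.symm)
  filter_upwards [ball_mem_nhds _ (mul_pos (lt_min ht0 (sub_pos.2 ht1)) hba)] with z hz hzspan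
  obtain ⟨c, hc⟩ := Submodule.mem_span_singleton.1 hzspan
  have hcmin : |c| < min t (1 - t) := by
    rw [mem_ball, dist_eq_norm, ← hc, norm_smul, Real.norm_eq_abs] at hz
    exact lt_of_mul_lt_mul_right hz hba.le
  rw [openSegment_eq_image']
  refine ⟨t + c, ⟨?_, ?_⟩, by linear_combination (norm := module) hc⟩
  · linarith [neg_abs_le c, min_le_left t (1 - t)]
  · linarith [le_abs_self c, min_le_right t (1 - t)]

theorem eventually_mem_openSegment_of_lt_apply {f : X →L[ℝ] ℝ} {a b x w : X} (hab : a ≠ b)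
    (hx : x ∈ openSegment ℝ a b) (hker : f.ker ≤ ℝ ∙ (b - a)) (hw : f x < f w) :
    ∀ᶠ e in 𝓝 x, f x < f e → ∃ z ∈ openSegment ℝ a b, e ∈ openSegment ℝ w z := by
  set β : X → ℝ := fun e => (f e - f x) / (f w - f x)
  -- `π e` is where the ray from `w` through `e` meets the line `f = f x`.
  set π : X → X := fun e => (1 - β e)⁻¹ • (e - β e • w)
  have hβx : β x = 0 := by simp [β]
  have hπ : Tendsto π (𝓝 x) (𝓝 x) := by
    have : ContinuousAt π x := by fun_prop (disch := simp [hβx])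
    simpa [π, hβx] using this.tendsto
  filter_upwards [hπ.eventually (eventually_mem_openSegment_of_sub_mem_span hab hx),
    (by fun_prop : Continuous β).continuousAt.eventually (gt_mem_nhds (hβx ▸ zero_lt_one))]
    with e hseg hβ1 hfe
  have hβ0 : 0 < β e := div_pos (sub_pos.2 hfe) (sub_pos.2 hw)
  refine ⟨π e, hseg (hker ?_), β e, 1 - β e, hβ0, sub_pos.2 hβ1, by ring, ?_⟩
  · have h1β : 1 - β e ≠ 0 := (sub_pos.2 hβ1).ne'
    rw [LinearMap.mem_ker, ContinuousLinearMap.coe_coe, map_sub, sub_eq_zero]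
    simp only [π, map_smul, map_sub, smul_eq_mul]
    rw [inv_mul_eq_iff_eq_mul₀ h1β]
    simp only [β]
    field_simp [(sub_pos.2 hw).ne']
    ring
  · simp only [π, smul_smul, mul_inv_cancel₀ (sub_pos.2 hβ1).ne', one_smul]
    abel

theorem eventually_apply_le_of_mem_extremePoints {C : Set X} (hconv : Convex ℝ C)
    {f : X →L[ℝ] ℝ} {a b x : X} (ha : a ∈ C) (hb : b ∈ C) (hab : a ≠ b)
    (hx : x ∈ openSegment ℝ a b) (hker : f.ker ≤ ℝ ∙ (b - a)) :
    ∀ᶠ e in 𝓝 x, e ∈ C.extremePoints ℝ → f e ≤ f x := by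
  by_cases h : ∃ w ∈ C, f x < f w
  · obtain ⟨w, hwC, hw⟩ := h
    filter_upwards [eventually_mem_openSegment_of_lt_apply hab hx hker hw] with e he hext
    by_contra! hfe
    obtain ⟨z, hz, hez⟩ := he hfe
    obtain ⟨-, rfl⟩ := (mem_extremePoints.1 hext).2 w hwC z (hconv.openSegment_subset ha hb hz) hez
    exact notMem_openSegment_of_mem_extremePoints hext ha hb hab hz
  · push Not at h
    exact .of_forall fun e he => h e he.1

theorem exists_ker_eq_span_singleton_of_finrank_eq_two (hdim : finrank ℝ X = 2) {u : X}
    (hu : u ≠ 0) : ∃ f : X →L[ℝ] ℝ, f.ker = ℝ ∙ u := by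
  have : FiniteDimensional ℝ X := Module.finite_of_finrank_eq_succ hdim
  obtain ⟨f, hf, hle⟩ := (ℝ ∙ u).exists_le_ker_of_lt_top <| lt_top_iff_ne_top.2 fun h => by
    have := finrank_span_singleton (K := ℝ) hu
    rw [h, finrank_top] at this
    omega
  refine ⟨LinearMap.toContinuousLinearMap f, (Submodule.eq_of_le_of_finrank_le hle ?_).symm⟩
  have := Submodule.finrank_lt (LinearMap.ker_eq_top.not.2 hf)
  rw [finrank_span_singleton hu]
  omega

theorem isClosed_extremePoints_of_finrank_eq_two (hdim : finrank ℝ X = 2) {C : Set X}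
    (hC : IsClosed C) (hconv : Convex ℝ C) : IsClosed (C.extremePoints ℝ) := by
  refine isClosed_of_closure_subset fun x hx => ?_
  have hxC : x ∈ C := closure_minimal extremePoints_subset hC hx
  by_contra hxe
  obtain ⟨a, ha, b, hb, hxab, hne⟩ :
      ∃ a ∈ C, ∃ b ∈ C, x ∈ openSegment ℝ a b ∧ ¬(a = x ∧ b = x) := by
    simpa [mem_extremePoints, hxC] using hxe
  have hab : a ≠ b := by
    rintro rfl
    rw [openSegment_same, mem_singleton_iff] at hxab
    exact hne ⟨hxab.symm, hxab.symm⟩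
  obtain ⟨f, hf⟩ := exists_ker_eq_span_singleton_of_finrank_eq_two hdim (sub_ne_zero.2 hab.symm)
  obtain ⟨e, he, hle, hge, hseg⟩ := ((mem_closure_iff_frequently.1 hx).and_eventually
    ((eventually_apply_le_of_mem_extremePoints hconv ha hb hab hxab hf.le).and
    ((eventually_apply_le_of_mem_extremePoints (f := -f) hconv ha hb hab hxab
      (by simpa using hf.le)).and
    (eventually_mem_openSegment_of_sub_mem_span hab hxab)))).exists
  have hfe : f e = f x := le_antisymm (hle he) (by simpa using hge he)
  exact notMem_openSegment_of_mem_extremePoints he ha hb hab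
    (hseg (hf ▸ by simp [LinearMap.mem_ker, hfe]))

/-- If `X` is a two-dimensional Banach space and `C` is a closed bounded convex subset of `X`,
then every semi denting point of `C` is a denting point of `C`. -/
theorem semiDentingPoints_subset_dentingPoints_of_finrank_two
    [FiniteDimensional ℝ X] (hdim : Module.finrank ℝ X = 2)
    (C : Set X) (hC : IsClosed C) (hb : Bornology.IsBounded C) (hconv : Convex ℝ C) :
    semiDentingPoints C ⊆ dentingPoints C := by
  have hCc : IsCompact C := Metric.isCompact_of_isClosed_isBounded hC hb
  intro x hx
  apply mem_dentingPoints_of_mem_extremePoints hCc hconv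
  exact (isClosed_extremePoints_of_finrank_eq_two hdim hC hconv).closure_subset
    (semiDentingPoints_subset_closure_extremePoints hCc hx)
end

section
/- Let X and Y be Banach spaces and let Z = X ⊕_∞ Y (direct sum with max norm). Then (x, y) is a semi denting point of B_Z if and only if x is a semi denting point of B_X and y is a semi denting point of B_Y. -/
/-!
A functional `f` on `X ⊕_∞ Y` splits as `f (u, v) = f₁ u + f₂ v` with `‖f‖ = ‖f₁‖ + ‖f₂‖`.
Hence the slice `S(f, δ)` lies in `S(f₁, δ) × S(f₂, δ)`, which gives the semi denting property of
`(x, y)` from slices at `x` and `y`; conversely it contains `S(f₁, δ/2) × {v}` for any `v` almost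
norming `f₂`, so a slice close to `(x, y)` yields a slice `S(f₁, δ/2)` close to `x`. The second
factor is handled by the swap isometry `X ⊕_∞ Y ≅ Y ⊕_∞ X`.
-/

/-- A point `x₀` of the closed unit ball of `Z` is a *semi denting point* of `B_Z` if for every
`ε > 0` there is a slice `S(B_Z, f, δ) = {z ∈ B_Z : f z > ‖f‖ - δ}` contained in `B(x₀, ε)`. -/
def IsSemiDentingPointOfBall {Z : Type*} [NormedAddCommGroup Z] [NormedSpace ℝ Z] (x : Z) :
    Prop :=
  ‖x‖ ≤ 1 ∧ ∀ ε > (0 : ℝ), ∃ (f : Z →L[ℝ] ℝ) (δ : ℝ), 0 < δ ∧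
    {z : Z | ‖z‖ ≤ 1 ∧ f z > ‖f‖ - δ} ⊆ Metric.closedBall x ε

open Metric

section Functional

variable {E : Type*} [NormedAddCommGroup E] [NormedSpace ℝ E]

def ballSlice (f : E →L[ℝ] ℝ) (δ : ℝ) : Set E :=
  {z | ‖z‖ ≤ 1 ∧ f z > ‖f‖ - δ}

theorem ContinuousLinearMap.apply_le_opNorm_of_norm_le_one (f : E →L[ℝ] ℝ) {u : E}
    (hu : ‖u‖ ≤ 1) : f u ≤ ‖f‖ :=
  (Real.le_norm_self _).trans (f.unit_le_opNorm u hu)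

theorem ContinuousLinearMap.exists_norm_le_one_opNorm_sub_lt_apply (f : E →L[ℝ] ℝ) {η : ℝ}
    (hη : 0 < η) : ∃ u : E, ‖u‖ ≤ 1 ∧ ‖f‖ - η < f u := by
  obtain ⟨u, hu, hlt⟩ := f.exists_lt_apply_of_lt_opNorm (sub_lt_self ‖f‖ hη)
  rw [Real.norm_eq_abs] at hlt
  rcases lt_abs.1 hlt with h | h
  · exact ⟨u, hu.le, h⟩
  · exact ⟨-u, by simpa using hu.le, by simpa using h⟩

end Functional

section Product

variable {X Y : Type*} [NormedAddCommGroup X] [NormedSpace ℝ X]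
  [NormedAddCommGroup Y] [NormedSpace ℝ Y]

theorem IsSemiDentingPointOfBall.map (e : X ≃ₗᵢ[ℝ] Y) {x : X} (h : IsSemiDentingPointOfBall x) :
    IsSemiDentingPointOfBall (e x) := by
  refine ⟨by rw [e.norm_map]; exact h.1, fun ε hε => ?_⟩
  obtain ⟨f, δ, hδ, hsub⟩ := h.2 ε hε
  refine ⟨f.comp (e.symm.toContinuousLinearEquiv : Y →L[ℝ] X), δ, hδ, fun z ⟨hz, hfz⟩ => ?_⟩
  rw [ContinuousLinearMap.opNorm_comp_linearIsometryEquiv] at hfz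
  have : e.symm z ∈ closedBall x ε := hsub ⟨by rwa [e.symm.norm_map], hfz⟩
  rwa [mem_closedBall, ← e.dist_map, e.apply_symm_apply] at this

theorem isSemiDentingPointOfBall_map_iff (e : X ≃ₗᵢ[ℝ] Y) {x : X} :
    IsSemiDentingPointOfBall (e x) ↔ IsSemiDentingPointOfBall x :=
  ⟨fun h => by simpa using h.map e.symm, fun h => h.map e⟩

theorem ContinuousLinearMap.opNorm_coprod (f₁ : X →L[ℝ] ℝ) (f₂ : Y →L[ℝ] ℝ) :
    ‖f₁.coprod f₂‖ = ‖f₁‖ + ‖f₂‖ := by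
  refine le_antisymm (opNorm_le_bound _ (by positivity) fun p => ?_) ?_
  · calc ‖f₁ p.1 + f₂ p.2‖ ≤ ‖f₁‖ * ‖p.1‖ + ‖f₂‖ * ‖p.2‖ :=
          (norm_add_le _ _).trans (add_le_add (f₁.le_opNorm _) (f₂.le_opNorm _))
      _ ≤ (‖f₁‖ + ‖f₂‖) * ‖p‖ := by
          rw [add_mul]
          exact add_le_add (mul_le_mul_of_nonneg_left (_root_.norm_fst_le p) (opNorm_nonneg _))
            (mul_le_mul_of_nonneg_left (_root_.norm_snd_le p) (opNorm_nonneg _))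
  · refine le_of_forall_pos_le_add fun η hη => ?_
    obtain ⟨u, hu, hfu⟩ := f₁.exists_norm_le_one_opNorm_sub_lt_apply (half_pos hη)
    obtain ⟨v, hv, hfv⟩ := f₂.exists_norm_le_one_opNorm_sub_lt_apply (half_pos hη)
    have := (f₁.coprod f₂).apply_le_opNorm_of_norm_le_one (u := (u, v)) (norm_prod_le_iff.2 ⟨hu, hv⟩)
    rw [coprod_apply] at this
    linarith

theorem ballSlice_coprod_subset_prod (f₁ : X →L[ℝ] ℝ) (f₂ : Y →L[ℝ] ℝ) (δ₁ δ₂ : ℝ) :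
    ballSlice (f₁.coprod f₂) (min δ₁ δ₂) ⊆ ballSlice f₁ δ₁ ×ˢ ballSlice f₂ δ₂ := by
  rintro ⟨u, v⟩ ⟨huv, hf⟩
  obtain ⟨hu, hv⟩ := norm_prod_le_iff.1 huv
  have hfu := f₁.apply_le_opNorm_of_norm_le_one hu
  have hfv := f₂.apply_le_opNorm_of_norm_le_one hv
  rw [ContinuousLinearMap.opNorm_coprod, ContinuousLinearMap.coprod_apply] at hf
  have := min_le_left δ₁ δ₂
  have := min_le_right δ₁ δ₂
  exact ⟨⟨hu, by linarith⟩, ⟨hv, by linarith⟩⟩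

theorem exists_mk_mem_ballSlice_coprod (f₁ : X →L[ℝ] ℝ) (f₂ : Y →L[ℝ] ℝ) {δ : ℝ} (hδ : 0 < δ) :
    ∃ v : Y, ∀ u ∈ ballSlice f₁ (δ / 2), (u, v) ∈ ballSlice (f₁.coprod f₂) δ := by
  obtain ⟨v, hv, hfv⟩ := f₂.exists_norm_le_one_opNorm_sub_lt_apply (half_pos hδ)
  refine ⟨v, fun u ⟨hu, hfu⟩ => ⟨norm_prod_le_iff.2 ⟨hu, hv⟩, ?_⟩⟩
  rw [ContinuousLinearMap.opNorm_coprod, ContinuousLinearMap.coprod_apply]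
  linarith

theorem IsSemiDentingPointOfBall.prod {x : X} {y : Y} (hx : IsSemiDentingPointOfBall x)
    (hy : IsSemiDentingPointOfBall y) : IsSemiDentingPointOfBall (x, y) := by
  refine ⟨norm_prod_le_iff.2 ⟨hx.1, hy.1⟩, fun ε hε => ?_⟩
  obtain ⟨f₁, δ₁, hδ₁, hsub₁⟩ := hx.2 ε hε
  obtain ⟨f₂, δ₂, hδ₂, hsub₂⟩ := hy.2 ε hε
  refine ⟨f₁.coprod f₂, min δ₁ δ₂, lt_min hδ₁ hδ₂, ?_⟩
  rw [← closedBall_prod_same]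
  exact (ballSlice_coprod_subset_prod f₁ f₂ δ₁ δ₂).trans (Set.prod_mono hsub₁ hsub₂)

theorem IsSemiDentingPointOfBall.fst {x : X} {y : Y} (h : IsSemiDentingPointOfBall (x, y)) :
    IsSemiDentingPointOfBall x := by
  refine ⟨(norm_prod_le_iff.1 h.1).1, fun ε hε => ?_⟩
  obtain ⟨f, δ, hδ, hsub⟩ := h.2 ε hε
  obtain ⟨f₁, f₂, rfl⟩ : ∃ (f₁ : X →L[ℝ] ℝ) (f₂ : Y →L[ℝ] ℝ), f = f₁.coprod f₂ :=
    ⟨_, _, (ContinuousLinearMap.coprod_comp_inl_inr f).symm⟩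
  obtain ⟨v, hv⟩ := exists_mk_mem_ballSlice_coprod f₁ f₂ hδ
  refine ⟨f₁, δ / 2, half_pos hδ, fun u hu => ?_⟩
  have := hsub (hv u hu)
  rw [← closedBall_prod_same] at this
  exact this.1

theorem IsSemiDentingPointOfBall.snd {x : X} {y : Y} (h : IsSemiDentingPointOfBall (x, y)) :
    IsSemiDentingPointOfBall y :=
  ((isSemiDentingPointOfBall_map_iff (LinearIsometryEquiv.prodComm ℝ X Y)).2 h).fst

end Product

theorem isSemiDentingPointOfBall_prod_top_iff_general
    {X Y : Type*} [NormedAddCommGroup X] [NormedSpace ℝ X]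
    [NormedAddCommGroup Y] [NormedSpace ℝ Y] (x : X) (y : Y) :
    IsSemiDentingPointOfBall ((WithLp.equiv ⊤ (X × Y)).symm (x, y)) ↔
      IsSemiDentingPointOfBall x ∧ IsSemiDentingPointOfBall y := by
  rw [← isSemiDentingPointOfBall_map_iff (WithLp.prodEquivₗᵢ (𝕜 := ℝ))]
  exact ⟨fun h => ⟨h.fst, h.snd⟩, fun h => h.1.prod h.2⟩

/-- For Banach spaces `X`, `Y` and `Z = X ⊕_∞ Y` (max norm), `(x, y)` is a semi denting point
of `B_Z` iff `x` is a semi denting point of `B_X` and `y` is a semi denting point of `B_Y`. -/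
theorem isSemiDentingPointOfBall_prod_top_iff
    {X Y : Type*} [NormedAddCommGroup X] [NormedSpace ℝ X] [CompleteSpace X]
    [NormedAddCommGroup Y] [NormedSpace ℝ Y] [CompleteSpace Y] (x : X) (y : Y) :
    IsSemiDentingPointOfBall ((WithLp.equiv ⊤ (X × Y)).symm (x, y)) ↔
      IsSemiDentingPointOfBall x ∧ IsSemiDentingPointOfBall y :=
  isSemiDentingPointOfBall_prod_top_iff_general x y
end

section
/- Let X and Y be Banach spaces. If (x, y) is a semi SCS point of B_{X ⊕_∞ Y}, then x is a semi SCS point of B_X and y is a semi SCS point of B_Y. -/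
/-!
The projection `X ⊕_∞ Y → X` has norm one, and since `‖f‖ ≤ ‖f(·, 0)‖ + ‖f(0, ·)‖`, every slice
`{f > ‖f‖ - δ}` of `B_{X ⊕_∞ Y}` contains `S × {b}`, where `S` is the slice
`{f(·, 0) > ‖f(·, 0)‖ - δ/2}` of `B_X` and `b` is any point of the slice `{f(0, ·) > ‖f(0, ·)‖ - δ/2}`
of `B_Y`. So a convex combination of points of the slices `S` lifts to a convex combination of points
of the original slices, which is `ε`-close to `(x, y)`, and projecting back it is `ε`-close to `x`.
-/

/-- A point `x₀` of the closed unit ball of `Z` is a *semi SCS point* of `B_Z` if for every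
`ε > 0` there exist finitely many slices `Sᵢ = {z ∈ B_Z : fᵢ z > ‖fᵢ‖ - δᵢ}` of `B_Z` and convex
weights `λᵢ ≥ 0`, `Σ λᵢ = 1`, such that the convex combination `Σ λᵢ Sᵢ` is contained in
`B(x₀, ε)`. -/
def IsSemiSCSPointOfBall {Z : Type*} [NormedAddCommGroup Z] [NormedSpace ℝ Z] (x : Z) : Prop :=
  ‖x‖ ≤ 1 ∧ ∀ ε > (0 : ℝ), ∃ (n : ℕ) (lam : Fin n → ℝ) (f : Fin n → (Z →L[ℝ] ℝ))
    (δ : Fin n → ℝ), (∀ i, 0 ≤ lam i) ∧ (∑ i, lam i) = 1 ∧ (∀ i, 0 < δ i) ∧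
    ∀ z : Fin n → Z, (∀ i, ‖z i‖ ≤ 1 ∧ f i (z i) > ‖f i‖ - δ i) →
      (∑ i, lam i • z i) ∈ Metric.closedBall x ε

open scoped ENNReal

namespace WithLp

variable (p : ℝ≥0∞) (𝕜 X Y : Type*)

section Module

variable [Semiring 𝕜] [TopologicalSpace X] [TopologicalSpace Y] [AddCommGroup X] [AddCommGroup Y]
  [Module 𝕜 X] [Module 𝕜 Y]

def inlL : X →L[𝕜] WithLp p (X × Y) :=
  (prodContinuousLinearEquiv p 𝕜 X Y).symm.toContinuousLinearMap.comp (.inl 𝕜 X Y)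

def inrL : Y →L[𝕜] WithLp p (X × Y) :=
  (prodContinuousLinearEquiv p 𝕜 X Y).symm.toContinuousLinearMap.comp (.inr 𝕜 X Y)

variable {p 𝕜 X Y}

theorem inlL_fst_add_inrL_snd (w : WithLp p (X × Y)) :
    inlL p 𝕜 X Y w.fst + inrL p 𝕜 X Y w.snd = w := by
  apply ofLp_injective p
  ext <;> simp [inlL, inrL]

end Module

variable {p 𝕜 X Y} [Fact (1 ≤ p)] [NontriviallyNormedField 𝕜] [SeminormedAddCommGroup X]
  [SeminormedAddCommGroup Y] [NormedSpace 𝕜 X] [NormedSpace 𝕜 Y]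

theorem opNorm_fstL_le : ‖fstL p 𝕜 X Y‖ ≤ 1 :=
  ContinuousLinearMap.opNorm_le_bound _ zero_le_one fun w => by simpa using norm_fst_le _ w

theorem opNorm_sndL_le : ‖sndL p 𝕜 X Y‖ ≤ 1 :=
  ContinuousLinearMap.opNorm_le_bound _ zero_le_one fun w => by simpa using norm_snd_le _ w

theorem opNorm_le_opNorm_comp_inlL_add {F : Type*} [SeminormedAddCommGroup F] [NormedSpace 𝕜 F]
    (f : WithLp p (X × Y) →L[𝕜] F) :
    ‖f‖ ≤ ‖f.comp (inlL p 𝕜 X Y)‖ + ‖f.comp (inrL p 𝕜 X Y)‖ := by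
  refine f.opNorm_le_bound (by positivity) fun w => ?_
  calc ‖f w‖ = ‖f.comp (inlL p 𝕜 X Y) w.fst + f.comp (inrL p 𝕜 X Y) w.snd‖ := by
        simp [← map_add, inlL_fst_add_inrL_snd]
    _ ≤ ‖f.comp (inlL p 𝕜 X Y)‖ * ‖w.fst‖ + ‖f.comp (inrL p 𝕜 X Y)‖ * ‖w.snd‖ :=
        norm_add_le_of_le ((f.comp _).le_opNorm _) ((f.comp _).le_opNorm _)
    _ ≤ (‖f.comp (inlL p 𝕜 X Y)‖ + ‖f.comp (inrL p 𝕜 X Y)‖) * ‖w‖ := by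
        rw [add_mul]
        gcongr
        exacts [norm_fst_le _ w, norm_snd_le _ w]

end WithLp

section Slices

variable {Z W : Type*} [NormedAddCommGroup Z] [NormedSpace ℝ Z] [NormedAddCommGroup W]
  [NormedSpace ℝ W]

def unitBallSlice (f : Z →L[ℝ] ℝ) (δ : ℝ) : Set Z := {z | ‖z‖ ≤ 1 ∧ ‖f‖ - δ < f z}

theorem unitBallSlice_nonempty (f : Z →L[ℝ] ℝ) {δ : ℝ} (hδ : 0 < δ) :
    (unitBallSlice f δ).Nonempty := by
  obtain ⟨z, hz, hfz⟩ := f.exists_lt_apply_of_lt_opNorm (sub_lt_self ‖f‖ hδ)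
  rcases le_or_gt 0 (f z) with hpos | hneg
  · exact ⟨z, hz.le, by rwa [Real.norm_of_nonneg hpos] at hfz⟩
  · exact ⟨-z, by simpa using hz.le, by rwa [Real.norm_of_nonpos hneg.le, ← map_neg] at hfz⟩

/-- `σ` need not be affine: only `P` is ever applied to a convex combination of lifted points. -/
def LiftsUnitBallSlices (P : W →L[ℝ] Z) : Prop :=
  ∀ (f : W →L[ℝ] ℝ) (δ : ℝ), 0 < δ → ∃ (g : Z →L[ℝ] ℝ) (η : ℝ) (σ : Z → W), 0 < η ∧
    ∀ z ∈ unitBallSlice g η, σ z ∈ unitBallSlice f δ ∧ P (σ z) = z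

theorem IsSemiSCSPointOfBall.map {P : W →L[ℝ] Z} (hP : ‖P‖ ≤ 1)
    (hlift : LiftsUnitBallSlices P) {w₀ : W} (hw₀ : IsSemiSCSPointOfBall w₀) :
    IsSemiSCSPointOfBall (P w₀) := by
  obtain ⟨hw₀_norm, hw₀_slices⟩ := hw₀
  refine ⟨(P.le_of_opNorm_le hP w₀).trans (by simpa using hw₀_norm), fun ε hε => ?_⟩
  obtain ⟨n, lam, f, δ, hlam, hsum, hδ, hball⟩ := hw₀_slices ε hε
  choose g η σ hη hσ using fun i => hlift (f i) (δ i) (hδ i)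
  refine ⟨n, lam, g, η, hlam, hsum, hη, fun z hz => ?_⟩
  have hlifted := hball (fun i => σ i (z i)) fun i => (hσ i (z i) (hz i)).1
  have hproj : ∑ i, lam i • z i = P (∑ i, lam i • σ i (z i)) := by
    simp only [map_sum, map_smul, fun i => (hσ i (z i) (hz i)).2]
  rw [Metric.mem_closedBall, dist_eq_norm] at hlifted ⊢
  rw [hproj, ← map_sub]
  exact (P.le_of_opNorm_le hP _).trans (by simpa using hlifted)

end Slices

section ProdTop

open WithLp

variable {X Y : Type*} [NormedAddCommGroup X] [NormedSpace ℝ X] [NormedAddCommGroup Y]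
  [NormedSpace ℝ Y]

theorem WithLp.toLp_mem_unitBallSlice (f : WithLp ⊤ (X × Y) →L[ℝ] ℝ) {a : X} {b : Y}
    {δ₁ δ₂ : ℝ} (ha : a ∈ unitBallSlice (f.comp (inlL ⊤ ℝ X Y)) δ₁)
    (hb : b ∈ unitBallSlice (f.comp (inrL ⊤ ℝ X Y)) δ₂) :
    toLp ⊤ (a, b) ∈ unitBallSlice f (δ₁ + δ₂) := by
  refine ⟨by simpa using max_le ha.1 hb.1, ?_⟩
  have hsplit : f (toLp ⊤ (a, b)) = f.comp (inlL ⊤ ℝ X Y) a + f.comp (inrL ⊤ ℝ X Y) b := by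
    simpa using congrArg f (inlL_fst_add_inrL_snd (𝕜 := ℝ) (toLp ⊤ (a, b))).symm
  linarith [ha.2, hb.2, opNorm_le_opNorm_comp_inlL_add f]

theorem liftsUnitBallSlices_fstL : LiftsUnitBallSlices (fstL ⊤ ℝ X Y) := by
  intro f δ hδ
  obtain ⟨b, hb⟩ := unitBallSlice_nonempty (f.comp (inrL ⊤ ℝ X Y)) (half_pos hδ)
  refine ⟨f.comp (inlL ⊤ ℝ X Y), δ / 2, fun a => toLp ⊤ (a, b), half_pos hδ, fun a ha => ?_⟩
  exact ⟨by simpa using toLp_mem_unitBallSlice f ha hb, rfl⟩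

theorem liftsUnitBallSlices_sndL : LiftsUnitBallSlices (sndL ⊤ ℝ X Y) := by
  intro f δ hδ
  obtain ⟨a, ha⟩ := unitBallSlice_nonempty (f.comp (inlL ⊤ ℝ X Y)) (half_pos hδ)
  refine ⟨f.comp (inrL ⊤ ℝ X Y), δ / 2, fun b => toLp ⊤ (a, b), half_pos hδ, fun b hb => ?_⟩
  exact ⟨by simpa using toLp_mem_unitBallSlice f ha hb, rfl⟩

end ProdTop

theorem isSemiSCSPointOfBall_prod_top_general
    {X Y : Type*} [NormedAddCommGroup X] [NormedSpace ℝ X]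
    [NormedAddCommGroup Y] [NormedSpace ℝ Y] (x : X) (y : Y)
    (h : IsSemiSCSPointOfBall ((WithLp.equiv ⊤ (X × Y)).symm (x, y))) :
    IsSemiSCSPointOfBall x ∧ IsSemiSCSPointOfBall y :=
  ⟨h.map (P := WithLp.fstL ⊤ ℝ X Y) WithLp.opNorm_fstL_le liftsUnitBallSlices_fstL,
    h.map (P := WithLp.sndL ⊤ ℝ X Y) WithLp.opNorm_sndL_le liftsUnitBallSlices_sndL⟩

/-- For Banach spaces `X`, `Y` and `Z = X ⊕_∞ Y` (max norm): if `(x, y)` is a semi SCS point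
of `B_Z`, then `x` is a semi SCS point of `B_X` and `y` is a semi SCS point of `B_Y`. -/
theorem isSemiSCSPointOfBall_prod_top
    {X Y : Type*} [NormedAddCommGroup X] [NormedSpace ℝ X] [CompleteSpace X]
    [NormedAddCommGroup Y] [NormedSpace ℝ Y] [CompleteSpace Y] (x : X) (y : Y)
    (h : IsSemiSCSPointOfBall ((WithLp.equiv ⊤ (X × Y)).symm (x, y))) :
    IsSemiSCSPointOfBall x ∧ IsSemiSCSPointOfBall y :=
  isSemiSCSPointOfBall_prod_top_general x y h
end

section
/- Let X and Y be Banach spaces, x ∈ X \ {0}, y ∈ Y \ {0}. Then (x, y) is not a semi denting point of B_{X ⊕_1 Y}. -/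
open WithLp

section ProdOne

variable {𝕜 X Y : Type*} [NontriviallyNormedField 𝕜] [NormedAddCommGroup X] [NormedSpace 𝕜 X]
  [NormedAddCommGroup Y] [NormedSpace 𝕜 Y]

lemma WithLp.norm_toLp_one (a : X) (b : Y) : ‖toLp 1 (a, b)‖ = ‖a‖ + ‖b‖ := by
  rw [prod_norm_eq_add (by simp)]
  simp

lemma WithLp.dist_toLp_one (a x : X) (b y : Y) :
    dist (toLp 1 (a, b)) (toLp 1 (x, y)) = dist a x + dist b y := by
  rw [dist_eq_norm, ← toLp_sub, Prod.mk_sub_mk, norm_toLp_one, dist_eq_norm, dist_eq_norm]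

variable (𝕜 X Y) in
def WithLp.inlOneL : X →L[𝕜] WithLp 1 (X × Y) :=
  (prodContinuousLinearEquiv 1 𝕜 X Y).symm.toContinuousLinearMap.comp (.inl 𝕜 X Y)

variable (𝕜 X Y) in
def WithLp.inrOneL : Y →L[𝕜] WithLp 1 (X × Y) :=
  (prodContinuousLinearEquiv 1 𝕜 X Y).symm.toContinuousLinearMap.comp (.inr 𝕜 X Y)

@[simp] lemma WithLp.inlOneL_apply (a : X) : inlOneL 𝕜 X Y a = toLp 1 (a, 0) := rfl

@[simp] lemma WithLp.inrOneL_apply (b : Y) : inrOneL 𝕜 X Y b = toLp 1 (0, b) := rfl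

lemma ContinuousLinearMap.opNorm_le_max_comp_inlOneL_inrOneL {F : Type*} [NormedAddCommGroup F]
    [NormedSpace 𝕜 F] (f : WithLp 1 (X × Y) →L[𝕜] F) :
    ‖f‖ ≤ max ‖f.comp (inlOneL 𝕜 X Y)‖ ‖f.comp (inrOneL 𝕜 X Y)‖ := by
  set M := max ‖f.comp (inlOneL 𝕜 X Y)‖ ‖f.comp (inrOneL 𝕜 X Y)‖
  refine f.opNorm_le_bound (by positivity) fun z => ?_
  have hsplit : f z = f (inlOneL 𝕜 X Y z.fst) + f (inrOneL 𝕜 X Y z.snd) := by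
    rw [← map_add, inlOneL_apply, inrOneL_apply, ← toLp_add, Prod.mk_add_mk, add_zero, zero_add]
    rfl
  calc ‖f z‖ ≤ ‖f.comp (inlOneL 𝕜 X Y) z.fst‖ + ‖f.comp (inrOneL 𝕜 X Y) z.snd‖ :=
        hsplit ▸ norm_add_le _ _
    _ ≤ M * ‖z.fst‖ + M * ‖z.snd‖ := by
        gcongr
        · exact (ContinuousLinearMap.le_opNorm _ _).trans (by gcongr; exact le_max_left _ _)
        · exact (ContinuousLinearMap.le_opNorm _ _).trans (by gcongr; exact le_max_right _ _)
    _ = M * ‖z‖ := by rw [← mul_add, ← norm_toLp_one]; rfl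

end ProdOne

lemma ContinuousLinearMap.exists_norm_le_one_lt_apply {E : Type*} [NormedAddCommGroup E]
    [NormedSpace ℝ E] (g : E →L[ℝ] ℝ) {r : ℝ} (hr : r < ‖g‖) : ∃ a : E, ‖a‖ ≤ 1 ∧ r < g a := by
  obtain ⟨a, ha, hga⟩ := g.exists_lt_apply_of_lt_opNorm hr
  rw [Real.norm_eq_abs, lt_abs] at hga
  rcases hga with hga | hga
  · exact ⟨a, ha.le, hga⟩
  · exact ⟨-a, (norm_neg a).le.trans ha.le, by rwa [map_neg]⟩

section Slices

variable {X Y : Type*} [NormedAddCommGroup X] [NormedSpace ℝ X]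
  [NormedAddCommGroup Y] [NormedSpace ℝ Y]

lemma WithLp.exists_toLp_one_inl_or_inr_lt_apply (f : WithLp 1 (X × Y) →L[ℝ] ℝ) {r : ℝ}
    (hr : r < ‖f‖) :
    (∃ a : X, ‖a‖ ≤ 1 ∧ r < f (toLp 1 (a, 0))) ∨ (∃ b : Y, ‖b‖ ≤ 1 ∧ r < f (toLp 1 (0, b))) := by
  rcases lt_max_iff.1 (hr.trans_le f.opNorm_le_max_comp_inlOneL_inrOneL) with h | h
  · exact .inl ((f.comp (inlOneL ℝ X Y)).exists_norm_le_one_lt_apply h)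
  · exact .inr ((f.comp (inrOneL ℝ X Y)).exists_norm_le_one_lt_apply h)

end Slices

theorem not_isSemiDentingPointOfBall_prod_one_general
    {X Y : Type*} [NormedAddCommGroup X] [NormedSpace ℝ X]
    [NormedAddCommGroup Y] [NormedSpace ℝ Y]
    (x : X) (y : Y) (hx : x ≠ 0) (hy : y ≠ 0) :
    ¬ IsSemiDentingPointOfBall ((WithLp.equiv 1 (X × Y)).symm (x, y)) := by
  rintro ⟨-, h⟩
  have hmin : 0 < min ‖x‖ ‖y‖ := lt_min (norm_pos_iff.2 hx) (norm_pos_iff.2 hy)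
  obtain ⟨f, δ, hδ, hslice⟩ := h _ (half_pos hmin)
  rcases exists_toLp_one_inl_or_inr_lt_apply f (sub_lt_self _ hδ) with
    ⟨a, ha, hfa⟩ | ⟨b, hb, hfb⟩
  · have hdist := hslice ⟨by simpa [norm_toLp_one] using ha, hfa⟩
    rw [Metric.mem_closedBall, equiv_symm_apply, dist_toLp_one, dist_zero_left] at hdist
    linarith [dist_nonneg (x := a) (y := x), min_le_right ‖x‖ ‖y‖]
  · have hdist := hslice ⟨by simpa [norm_toLp_one] using hb, hfb⟩
    rw [Metric.mem_closedBall, equiv_symm_apply, dist_toLp_one, dist_zero_left] at hdist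
    linarith [dist_nonneg (x := b) (y := y), min_le_left ‖x‖ ‖y‖]

/-- For Banach spaces `X`, `Y` and `x ≠ 0`, `y ≠ 0`, the point `(x, y)` is not a semi denting
point of `B_{X ⊕_1 Y}`. -/
theorem not_isSemiDentingPointOfBall_prod_one
    {X Y : Type*} [NormedAddCommGroup X] [NormedSpace ℝ X] [CompleteSpace X]
    [NormedAddCommGroup Y] [NormedSpace ℝ Y] [CompleteSpace Y]
    (x : X) (y : Y) (hx : x ≠ 0) (hy : y ≠ 0) :
    ¬ IsSemiDentingPointOfBall ((WithLp.equiv 1 (X × Y)).symm (x, y)) :=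
  not_isSemiDentingPointOfBall_prod_one_general x y hx hy
end

section
/- Let X and Y be Banach spaces and 1 ≤ p < ∞. If the closed unit ball of X ⊕_p Y has a nonzero semi SCS point (x, y), then either B_X or B_Y admits convex combinations of slices of arbitrarily small diameter (i.e., X or Y has the BSCSP). -/
/-- A Banach space `X` has the *Ball Small Combination of Slices Property* (BSCSP) if `B_X`
contains convex combinations of slices of arbitrarily small diameter. -/
def BSCSP (X : Type*) [NormedAddCommGroup X] [NormedSpace ℝ X] : Prop :=
  ∀ ε > (0 : ℝ), ∃ (n : ℕ) (lam : Fin n → ℝ) (f : Fin n → (X →L[ℝ] ℝ)) (δ : Fin n → ℝ),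
    (∀ i, 0 ≤ lam i) ∧ (∑ i, lam i) = 1 ∧ (∀ i, 0 < δ i) ∧
    Metric.diam {w : X | ∃ z : Fin n → X,
      (∀ i, ‖z i‖ ≤ 1 ∧ f i (z i) > ‖f i‖ - δ i) ∧ w = ∑ i, lam i • z i} ≤ ε

/-! If `(x, y)` is a semi SCS point with `x ≠ 0`, pick points `wᵢ` deep in the slices `Sᵢ` of
`B_{X ⊕_p Y}` witnessing it. For `u` in the slice of `B_X` cut out by `fᵢ = Fᵢ(·, 0)`,
replacing the first coordinate of `wᵢ` by `‖wᵢ.1‖ u` stays in `Sᵢ`, because the `p`-norm is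
monotone in the norms of the coordinates. Projecting `∑ λᵢ Sᵢ ⊆ B((x, y), ε)` onto `X` puts
`∑ λᵢ ‖wᵢ.1‖ uᵢ` within `ε` of `x`, so the total weight `c = ∑ λᵢ ‖wᵢ.1‖` is at least `‖x‖ - ε`,
and dividing the weights by `c` gives convex combinations of slices of `B_X` of diameter
at most `2ε / c`. -/

open Metric

section Slices

variable {X : Type*} [NormedAddCommGroup X] [NormedSpace ℝ X]

theorem ContinuousLinearMap.exists_norm_le_one_lt_apply_s14 (F : X →L[ℝ] ℝ) {θ : ℝ} (hθ : 0 < θ) :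
    ∃ w : X, ‖w‖ ≤ 1 ∧ ‖F‖ - θ < F w := by
  obtain ⟨w, hw, hFw⟩ := F.exists_lt_apply_of_lt_opNorm (sub_lt_self _ hθ)
  rw [Real.norm_eq_abs, lt_abs] at hFw
  rcases hFw with hFw | hFw
  · exact ⟨w, hw.le, hFw⟩
  · exact ⟨-w, by simpa using hw.le, by simpa using hFw⟩

/-- `x₀` is a limit of combinations `∑ μᵢ Sᵢ` of slices `Sᵢ` of `B_X`, where the weights
`μᵢ ≥ 0` need not sum to one. -/
def IsLimitOfSliceCombinations (x₀ : X) : Prop :=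
  ∀ ε > (0 : ℝ), ∃ (n : ℕ) (μ : Fin n → ℝ) (f : Fin n → (X →L[ℝ] ℝ)) (δ : Fin n → ℝ),
    (∀ i, 0 ≤ μ i) ∧ (∀ i, 0 < δ i) ∧
    ∀ u : Fin n → X, (∀ i, ‖u i‖ ≤ 1 ∧ f i (u i) > ‖f i‖ - δ i) →
      (∑ i, μ i • u i) ∈ closedBall x₀ ε

theorem norm_sum_smul_le_sum {ι : Type*} [Fintype ι] {μ : ι → ℝ} (hμ : ∀ i, 0 ≤ μ i)
    {u : ι → X} (hu : ∀ i, ‖u i‖ ≤ 1) : ‖∑ i, μ i • u i‖ ≤ ∑ i, μ i := by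
  refine (norm_sum_le _ _).trans (Finset.sum_le_sum fun i _ => ?_)
  rw [norm_smul, Real.norm_of_nonneg (hμ i)]
  exact mul_le_of_le_one_right (hμ i) (hu i)

theorem IsLimitOfSliceCombinations.bscsp {x₀ : X} (h : IsLimitOfSliceCombinations x₀)
    (hx₀ : x₀ ≠ 0) : BSCSP X := by
  intro ε hε
  set r := ‖x₀‖
  have hr : 0 < r := norm_pos_iff.mpr hx₀
  set η := min (r / 2) (ε * r / 4)
  obtain ⟨n, μ, f, δ, hμ, hδ, hmem⟩ := h η (by positivity)
  set c := ∑ i, μ i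
  have hc : r / 2 ≤ c := by
    choose u hu using fun i => (f i).exists_norm_le_one_lt_apply_s14 (hδ i)
    have hx₀S := norm_le_of_mem_closedBall (mem_closedBall_comm.mp (hmem u fun i => hu i))
    linarith [norm_sum_smul_le_sum hμ fun i => (hu i).1, min_le_left (r / 2) (ε * r / 4)]
  have hc0 : 0 < c := by linarith
  have hnormalize : ∀ u : Fin n → X, ∑ i, (μ i / c) • u i = c⁻¹ • ∑ i, μ i • u i := fun u => by
    simp_rw [Finset.smul_sum, smul_smul, div_eq_inv_mul]
  refine ⟨n, fun i => μ i / c, f, δ, fun i => div_nonneg (hμ i) hc0.le,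
    by rw [← Finset.sum_div, div_self hc0.ne'], hδ, ?_⟩
  refine diam_le_of_forall_dist_le hε.le ?_
  rintro _ ⟨u, hu, rfl⟩ _ ⟨v, hv, rfl⟩
  calc dist (∑ i, (μ i / c) • u i) (∑ i, (μ i / c) • v i)
      = c⁻¹ * dist (∑ i, μ i • u i) (∑ i, μ i • v i) := by
        rw [hnormalize, hnormalize, dist_smul₀, Real.norm_of_nonneg (inv_nonneg.mpr hc0.le)]
    _ ≤ c⁻¹ * (η + η) := by
        gcongr
        exact (dist_triangle_right _ _ x₀).trans (add_le_add (hmem u hu) (hmem v hv))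
    _ ≤ ε := by
        rw [inv_mul_le_iff₀ hc0]
        nlinarith [min_le_right (r / 2) (ε * r / 4)]

end Slices

section Complemented

variable {Z X : Type*} [NormedAddCommGroup Z] [NormedSpace ℝ Z]
  [NormedAddCommGroup X] [NormedSpace ℝ X]

theorem ContinuousLinearMap.lt_apply_sub_add_norm_smul (F : Z →L[ℝ] ℝ) (J : X →L[ℝ] Z)
    {w : Z} {a u : X} {δ : ℝ} (hδ : 0 ≤ δ) (ha : ‖a‖ ≤ 1) (hw : ‖F‖ - δ / 2 < F w)
    (hu : ‖F ∘L J‖ - δ / 2 < F (J u)) : ‖F‖ - δ < F (w - J a + J (‖a‖ • u)) := by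
  have hFJa : F (J a) ≤ ‖F ∘L J‖ * ‖a‖ := (le_abs_self _).trans ((F ∘L J).le_opNorm a)
  have hFJu : ‖a‖ * (‖F ∘L J‖ - δ / 2) ≤ ‖a‖ * F (J u) := by gcongr
  simp only [map_add, map_sub, map_smul, smul_eq_mul]
  nlinarith

/-- A point `u` of a slice of `B_X` is lifted into the slice `Sᵢ` of `B_Z` by replacing the
`J X`-component of a point `wᵢ` deep in `Sᵢ` with `‖P wᵢ‖ • u`. -/
theorem IsSemiSCSPointOfBall.isLimitOfSliceCombinations_of_retraction {J : X →L[ℝ] Z}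
    {P : Z →L[ℝ] X} (hPJ : ∀ u, P (J u) = u) (hP : ∀ z, ‖P z‖ ≤ ‖z‖)
    (hreplace : ∀ w v, ‖v‖ ≤ ‖P w‖ → ‖w - J (P w) + J v‖ ≤ ‖w‖) {z₀ : Z}
    (h : IsSemiSCSPointOfBall z₀) : IsLimitOfSliceCombinations (P z₀) := by
  intro ε hε
  obtain ⟨n, lam, F, δ, hlam, -, hδ, hS⟩ := h.2 ε hε
  choose w hw using fun i => (F i).exists_norm_le_one_lt_apply_s14 (half_pos (hδ i))
  refine ⟨n, fun i => lam i * ‖P (w i)‖, fun i => F i ∘L J, fun i => δ i / 2,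
    fun i => mul_nonneg (hlam i) (norm_nonneg _), fun i => half_pos (hδ i), fun u hu => ?_⟩
  set z : Fin n → Z := fun i => w i - J (P (w i)) + J (‖P (w i)‖ • u i)
  have hz : ∀ i, ‖z i‖ ≤ 1 ∧ F i (z i) > ‖F i‖ - δ i := fun i =>
    ⟨(hreplace _ _ (by
        rw [norm_smul, norm_norm]
        exact mul_le_of_le_one_right (norm_nonneg _) (hu i).1)).trans (hw i).1,
      (F i).lt_apply_sub_add_norm_smul J (hδ i).le ((hP _).trans (hw i).1) (hw i).2 (hu i).2⟩
  have hPz : P (∑ i, lam i • z i) = ∑ i, (lam i * ‖P (w i)‖) • u i := by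
    simp [z, hPJ, smul_smul]
  have hzS := hS z hz
  rw [mem_closedBall, dist_eq_norm] at hzS ⊢
  rw [← hPz, ← map_sub]
  exact (hP _).trans hzS

end Complemented

namespace WithLp

theorem prod_norm_toLp_le_of_le {p : ENNReal} {α β : Type*} [SeminormedAddCommGroup α]
    [SeminormedAddCommGroup β] {a a' : α} {b b' : β} (ha : ‖a'‖ ≤ ‖a‖) (hb : ‖b'‖ ≤ ‖b‖) :
    ‖toLp p (a', b')‖ ≤ ‖toLp p (a, b)‖ := by
  rcases p.trichotomy with rfl | rfl | hp
  · have hcard {s t : ℝ} (hs : 0 ≤ s) (hst : s ≤ t) :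
        (if s = 0 then (0 : ℝ) else 1) ≤ if t = 0 then 0 else 1 := by
      split_ifs with hs₀ ht₀ ht₀
      · rfl
      · norm_num
      · exact absurd (le_antisymm (ht₀ ▸ hst) hs) hs₀
      · rfl
    simp only [prod_norm_eq_card, toLp_fst, toLp_snd]
    exact add_le_add (hcard (norm_nonneg _) ha) (hcard (norm_nonneg _) hb)
  · simp only [prod_norm_eq_sup, toLp_fst, toLp_snd]
    exact sup_le_sup ha hb
  · simp only [prod_norm_eq_add hp, toLp_fst, toLp_snd]
    gcongr

variable {p : ENNReal} [Fact (1 ≤ p)] {X Y : Type*} [NormedAddCommGroup X] [NormedSpace ℝ X]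
  [NormedAddCommGroup Y] [NormedSpace ℝ Y]

theorem bscsp_fst_of_isSemiSCSPointOfBall {z : WithLp p (X × Y)} (h : IsSemiSCSPointOfBall z)
    (hz : z.fst ≠ 0) : BSCSP X := by
  refine (h.isLimitOfSliceCombinations_of_retraction (P := fstL p ℝ X Y)
    (J := (prodContinuousLinearEquiv p ℝ X Y).symm.toContinuousLinearMap ∘L .inl ℝ X Y)
    (fun _ => rfl) (norm_fst_le X) fun w v hv => ?_).bscsp hz
  have hcomponent : w - toLp p (w.fst, 0) + toLp p (v, 0) = toLp p (v, w.snd) :=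
    ofLp_injective p (Prod.ext (by simp) (by simp))
  exact (congrArg norm hcomponent).trans_le (prod_norm_toLp_le_of_le hv le_rfl)

theorem bscsp_snd_of_isSemiSCSPointOfBall {z : WithLp p (X × Y)} (h : IsSemiSCSPointOfBall z)
    (hz : z.snd ≠ 0) : BSCSP Y := by
  refine (h.isLimitOfSliceCombinations_of_retraction (P := sndL p ℝ X Y)
    (J := (prodContinuousLinearEquiv p ℝ X Y).symm.toContinuousLinearMap ∘L .inr ℝ X Y)
    (fun _ => rfl) (norm_snd_le X) fun w v hv => ?_).bscsp hz
  have hcomponent : w - toLp p (0, w.snd) + toLp p (0, v) = toLp p (w.fst, v) :=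
    ofLp_injective p (Prod.ext (by simp) (by simp))
  exact (congrArg norm hcomponent).trans_le (prod_norm_toLp_le_of_le le_rfl hv)

end WithLp

theorem bscsp_of_semiSCS_prod_general
    {X Y : Type*} [NormedAddCommGroup X] [NormedSpace ℝ X]
    [NormedAddCommGroup Y] [NormedSpace ℝ Y]
    (p : ENNReal) [Fact (1 ≤ p)] (x : X) (y : Y) (hxy : ¬ (x = 0 ∧ y = 0))
    (h : IsSemiSCSPointOfBall ((WithLp.equiv p (X × Y)).symm (x, y))) :
    BSCSP X ∨ BSCSP Y := by
  by_cases hx : x = 0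
  · exact .inr (WithLp.bscsp_snd_of_isSemiSCSPointOfBall h (not_and.mp hxy hx))
  · exact .inl (WithLp.bscsp_fst_of_isSemiSCSPointOfBall h hx)

/-- For Banach spaces `X`, `Y` and `1 ≤ p < ∞`: if `B_{X ⊕_p Y}` has a nonzero semi SCS point
`(x, y)`, then `X` or `Y` has the BSCSP. -/
theorem bscsp_of_semiSCS_prod
    {X Y : Type*} [NormedAddCommGroup X] [NormedSpace ℝ X] [CompleteSpace X]
    [NormedAddCommGroup Y] [NormedSpace ℝ Y] [CompleteSpace Y]
    (p : ENNReal) [Fact (1 ≤ p)] (hp : p ≠ ⊤) (x : X) (y : Y) (hxy : ¬ (x = 0 ∧ y = 0))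
    (h : IsSemiSCSPointOfBall ((WithLp.equiv p (X × Y)).symm (x, y))) :
    BSCSP X ∨ BSCSP Y :=
  bscsp_of_semiSCS_prod_general p x y hxy h
end

section
/- Let Y be an M-ideal in a Banach space X (so X* = Y* ⊕_1 Y^⊥ isometrically). If x₀* ∈ B_{Y*} is a semi w*-SCS point of B_{Y*}, then (viewed in X* via the ℓ₁ decomposition) x₀* is a semi w*-SCS point of B_{X*}. -/
/-- A point `x₀*` of `B_{Z*}` is a *semi w*-SCS point* of `B_{Z*}` if for every `ε > 0` there
exist w*-slices `Sᵢ = {g ∈ B_{Z*} : g(vᵢ) > 1 - δᵢ}` of `B_{Z*}` (determined by `vᵢ ∈ S_Z`) and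
convex weights `λᵢ` such that `Σ λᵢ Sᵢ ⊆ B(x₀*, ε)`. -/
def IsSemiWstarSCSPointOfDualBall {Z : Type*} [NormedAddCommGroup Z] [NormedSpace ℝ Z]
    (x₀ : Z →L[ℝ] ℝ) : Prop :=
  ‖x₀‖ ≤ 1 ∧ ∀ ε > (0 : ℝ), ∃ (n : ℕ) (lam : Fin n → ℝ) (v : Fin n → Z) (δ : Fin n → ℝ),
    (∀ i, ‖v i‖ = 1) ∧ (∀ i, 0 ≤ lam i) ∧ (∑ i, lam i) = 1 ∧ (∀ i, 0 < δ i) ∧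
    ∀ g : Fin n → (Z →L[ℝ] ℝ), (∀ i, ‖g i‖ ≤ 1 ∧ g i (v i) > 1 - δ i) →
      (∑ i, lam i • g i) ∈ Metric.closedBall x₀ ε

/-- Let `Y` be an M-ideal in a Banach space `X`, witnessed by a projection `P` on `X*` with
`ker P = Y^⊥` and `‖f‖ = ‖P f‖ + ‖f - P f‖`. If `y₀*` is a semi w*-SCS point of `B_{Y*}`,
then its (unique) norm-preserving extension to `X` is a semi w*-SCS point of `B_{X*}`. -/
theorem semiWstarSCS_of_MIdeal
    {X : Type*} [NormedAddCommGroup X] [NormedSpace ℝ X] [CompleteSpace X]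
    (Y : Submodule ℝ X) (hYc : IsClosed (Y : Set X))
    (P : (X →L[ℝ] ℝ) →L[ℝ] (X →L[ℝ] ℝ))
    (hproj : ∀ f, P (P f) = P f)
    (hker : ∀ f : X →L[ℝ] ℝ, P f = 0 ↔ ∀ y ∈ Y, f y = 0)
    (hM : ∀ f : X →L[ℝ] ℝ, ‖f‖ = ‖P f‖ + ‖f - P f‖)
    (y₀ : ↥Y →L[ℝ] ℝ) (h : IsSemiWstarSCSPointOfDualBall y₀)
    (f : X →L[ℝ] ℝ) (hext : ∀ y : Y, f y = y₀ y) (hnorm : ‖f‖ = ‖y₀‖) :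
    IsSemiWstarSCSPointOfDualBall f := by
  obtain ⟨hy₀, hY⟩ := h
  -- restriction decreases norm
  have hres : ∀ h : X →L[ℝ] ℝ, ‖h.comp Y.subtypeL‖ ≤ ‖h‖ := by
    intro h
    refine ContinuousLinearMap.opNorm_le_bound _ (norm_nonneg h) (fun y => ?_)
    simpa using h.le_opNorm (y : X)
  -- functionals vanishing on Y are killed by pairing with elements of Y
  have hvan : ∀ g : X →L[ℝ] ℝ, ∀ y ∈ Y, g y = P g y := by
    intro g y hy
    have h0 : P (g - P g) = 0 := by simp [map_sub, hproj]
    have := (hker _).mp h0 y hy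
    simpa [sub_eq_zero, ContinuousLinearMap.sub_apply] using this
  -- key: P is isometric on its range, compared with restriction to Y
  have key : ∀ h : X →L[ℝ] ℝ, P h = h → ‖h‖ ≤ ‖h.comp Y.subtypeL‖ := by
    intro h hPh
    obtain ⟨e, he, hen⟩ := exists_extension_norm_eq Y (h.comp Y.subtypeL)
    have hPe : P e = P h := by
      have h0 : P (e - h) = 0 := by
        rw [hker]
        intro y hy
        have := he ⟨y, hy⟩
        simp only [ContinuousLinearMap.sub_apply]
        simpa [ContinuousLinearMap.comp_apply] using sub_eq_zero.mpr this
      exact sub_eq_zero.mp (by simpa [map_sub] using h0)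
    calc ‖h‖ = ‖P e‖ := by rw [hPe, hPh]
      _ ≤ ‖P e‖ + ‖e - P e‖ := le_add_of_nonneg_right (norm_nonneg _)
      _ = ‖e‖ := (hM e).symm
      _ = ‖h.comp Y.subtypeL‖ := hen
  -- f is fixed by P
  have hfY : f.comp Y.subtypeL = y₀ := by
    ext y; simpa using hext y
  have hPfY : (P f).comp Y.subtypeL = y₀ := by
    ext y
    have := hvan f y y.2
    simp only [ContinuousLinearMap.comp_apply, Submodule.subtypeL_apply]
    rw [← this, hext]
  have hPf : P f = f := by
    have h1 : ‖y₀‖ ≤ ‖P f‖ := hPfY ▸ hres (P f)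
    have h2 : ‖f - P f‖ ≤ 0 := by
      have := hM f
      rw [hnorm] at this
      linarith
    have : f - P f = 0 := by
      rw [← norm_le_zero_iff]; exact h2
    exact (sub_eq_zero.mp this).symm
  constructor
  · rw [hnorm]; exact hy₀
  intro ε hε
  obtain ⟨n, lam, v, δ, hv, hlam, hsum, hδ, hslice⟩ := hY (ε / 2) (by positivity)
  refine ⟨n, lam, fun i => (v i : X), fun i => min (δ i) (ε / 2), ?_, hlam, hsum, ?_, ?_⟩
  · intro i; simpa using hv i
  · intro i; exact lt_min (hδ i) (by positivity)
  intro g hg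
  -- restrictions of P (g i)
  set r : Fin n → (↥Y →L[ℝ] ℝ) := fun i => (P (g i)).comp Y.subtypeL with hr
  have hgv : ∀ i, P (g i) (v i) = g i (v i) := fun i => (hvan (g i) (v i) (v i).2).symm
  have hrprop : ∀ i, ‖r i‖ ≤ 1 ∧ r i (v i) > 1 - δ i := by
    intro i
    constructor
    · exact le_trans (hres _) (le_trans (by
        have := hM (g i); have := norm_nonneg (g i - P (g i)); linarith [hM (g i)]) (hg i).1)
    · have : r i (v i) = g i (v i) := by
        simp only [hr, ContinuousLinearMap.comp_apply, Submodule.subtypeL_apply]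
        exact hgv i
      rw [this]
      have := (hg i).2
      have hmin : 1 - δ i ≤ 1 - min (δ i) (ε / 2) := by
        have := min_le_left (δ i) (ε / 2); linarith
      linarith
  have hclose := hslice r hrprop
  rw [Metric.mem_closedBall, dist_eq_norm] at hclose
  -- bound on the "P-part"
  have hPpart : ‖(∑ i, lam i • P (g i)) - f‖ ≤ ε / 2 := by
    have hfix : P ((∑ i, lam i • P (g i)) - f) = (∑ i, lam i • P (g i)) - f := by
      rw [map_sub, map_sum]
      simp only [map_smul, hproj, hPf]
    have hcomp : ((∑ i, lam i • P (g i)) - f).comp Y.subtypeL = (∑ i, lam i • r i) - y₀ := by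
      ext y
      simp [r, ContinuousLinearMap.sum_apply, hext y]
    have := key _ hfix
    rw [hcomp] at this
    exact le_trans this hclose
  -- bound on the "complement part"
  have hcomp_bd : ∀ i, ‖g i - P (g i)‖ ≤ ε / 2 := by
    intro i
    have h1 : ‖P (g i)‖ ≥ 1 - min (δ i) (ε / 2) := by
      have h2 : P (g i) (v i) > 1 - min (δ i) (ε / 2) := by
        rw [hgv i]; exact (hg i).2
      have h3 : P (g i) (v i) ≤ ‖P (g i)‖ := by
        have := (P (g i)).le_opNorm ((v i : X))
        have hnv : ‖(v i : X)‖ = 1 := by simpa using hv i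
        rw [hnv, mul_one] at this
        exact le_trans (le_abs_self _) this
      linarith
    have := hM (g i)
    have h4 := (hg i).1
    have := min_le_right (δ i) (ε / 2)
    linarith
  have hCpart : ‖∑ i, lam i • (g i - P (g i))‖ ≤ ε / 2 := by
    calc ‖∑ i, lam i • (g i - P (g i))‖ ≤ ∑ i, ‖lam i • (g i - P (g i))‖ :=
          norm_sum_le _ _
      _ ≤ ∑ i, lam i * (ε / 2) := by
          apply Finset.sum_le_sum
          intro i _
          refine le_trans (norm_smul_le (lam i) (g i - P (g i))) ?_
          rw [Real.norm_eq_abs, abs_of_nonneg (hlam i)]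
          exact mul_le_mul_of_nonneg_left (hcomp_bd i) (hlam i)
      _ = ε / 2 := by rw [← Finset.sum_mul, hsum, one_mul]
  -- combine
  rw [Metric.mem_closedBall, dist_eq_norm]
  have hdecomp : (∑ i, lam i • g i) - f =
      ((∑ i, lam i • P (g i)) - f) + ∑ i, lam i • (g i - P (g i)) := by
    rw [Finset.sum_congr rfl (fun i _ => smul_sub (lam i) (g i) (P (g i))),
      Finset.sum_sub_distrib]
    abel
  rw [hdecomp]
  calc ‖_ + _‖ ≤ ‖(∑ i, lam i • P (g i)) - f‖ + ‖∑ i, lam i • (g i - P (g i))‖ :=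
        norm_add_le _ _
    _ ≤ ε / 2 + ε / 2 := add_le_add hPpart hCpart
    _ = ε := by ring
end

section
/- Let X and Y be Banach spaces, a a semi denting point of B_X and b a semi denting point of B_Y. Then a ⊗ b is a semi denting point of the closed unit ball of the projective tensor product X ⊗̂_π Y. -/
lemma my_small_ball_trivial {X : Type*} [NormedAddCommGroup X] [NormedSpace ℝ X]
    (h : ∀ x : X, ‖x‖ ≤ 1 → ‖x‖ ≤ 1/2) : ∀ x : X, ‖x‖ ≤ 1 → x = 0 := by
  have key : ∀ n : ℕ, ∀ x : X, ‖x‖ ≤ 1 → ‖x‖ ≤ (1/2 : ℝ)^n := by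
    intro n
    induction n with
    | zero => intro x hx; simpa using hx
    | succ n ih =>
      intro x hx
      have h1 : ‖(2:ℝ) • x‖ ≤ 1 := by
        rw [norm_smul]
        have := h x hx
        simp only [Real.norm_ofNat]
        linarith
      have h2 := ih ((2:ℝ) • x) h1
      rw [norm_smul] at h2
      simp only [Real.norm_ofNat] at h2
      rw [pow_succ]
      nlinarith
  intro x hx
  have h0 : ‖x‖ ≤ 0 :=
    ge_of_tendsto' (tendsto_pow_atTop_nhds_zero_of_lt_one (by norm_num) (by norm_num))
      (fun n => key n x hx)
  simpa using le_antisymm h0 (norm_nonneg x)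

set_option maxHeartbeats 2000000 in
theorem isSemiDentingPointOfBall_tensor'
    {X Y Z : Type*} [NormedAddCommGroup X] [NormedSpace ℝ X] [CompleteSpace X]
    [NormedAddCommGroup Y] [NormedSpace ℝ Y] [CompleteSpace Y]
    [NormedAddCommGroup Z] [NormedSpace ℝ Z] [CompleteSpace Z]
    (t : X →L[ℝ] Y →L[ℝ] Z)
    (htnorm : ∀ (x : X) (y : Y), ‖t x y‖ = ‖x‖ * ‖y‖)
    (hball : {z : Z | ‖z‖ ≤ 1} =
      closure (convexHull ℝ {z : Z | ∃ (x : X) (y : Y), ‖x‖ ≤ 1 ∧ ‖y‖ ≤ 1 ∧ z = t x y}))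
    (hdual : ∀ (f : X →L[ℝ] ℝ) (g : Y →L[ℝ] ℝ), ∃ φ : Z →L[ℝ] ℝ,
      ‖φ‖ = ‖f‖ * ‖g‖ ∧ ∀ (x : X) (y : Y), φ (t x y) = f x * g y)
    (a : X) (b : Y)
    (ha : ‖a‖ ≤ 1 ∧ ∀ ε > (0 : ℝ), ∃ (f : X →L[ℝ] ℝ) (δ : ℝ), 0 < δ ∧
      {z : X | ‖z‖ ≤ 1 ∧ f z > ‖f‖ - δ} ⊆ Metric.closedBall a ε)
    (hb : ‖b‖ ≤ 1 ∧ ∀ ε > (0 : ℝ), ∃ (f : Y →L[ℝ] ℝ) (δ : ℝ), 0 < δ ∧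
      {z : Y | ‖z‖ ≤ 1 ∧ f z > ‖f‖ - δ} ⊆ Metric.closedBall b ε) :
    ‖t a b‖ ≤ 1 ∧ ∀ ε > (0 : ℝ), ∃ (f : Z →L[ℝ] ℝ) (δ : ℝ), 0 < δ ∧
      {z : Z | ‖z‖ ≤ 1 ∧ f z > ‖f‖ - δ} ⊆ Metric.closedBall (t a b) ε := by
  obtain ⟨ha1, ha2⟩ := ha
  obtain ⟨hb1, hb2⟩ := hb
  set S : Set Z := {z : Z | ∃ (x : X) (y : Y), ‖x‖ ≤ 1 ∧ ‖y‖ ≤ 1 ∧ z = t x y} with hS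
  have htab : ‖t a b‖ ≤ 1 := by
    rw [htnorm]
    exact mul_le_one₀ ha1 (norm_nonneg b) hb1
  refine ⟨htab, fun ε hε => ?_⟩
  set ε₁ : ℝ := min (ε/4) (1/2) with hε₁def
  have hε₁ : 0 < ε₁ := lt_min (by linarith) (by norm_num)
  obtain ⟨f, δ₁, hδ₁, hfs⟩ := ha2 ε₁ hε₁
  obtain ⟨g, δ₂, hδ₂, hgs⟩ := hb2 ε₁ hε₁
  -- degenerate cases
  by_cases hf : ‖f‖ = 0
  · -- f = 0 : X is trivial on the ball
    have hf0 : f = 0 := by rwa [norm_eq_zero] at hf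
    have hXball : ∀ x : X, ‖x‖ ≤ 1 → ‖x - a‖ ≤ ε₁ := by
      intro x hx
      have := hfs ⟨hx, by rw [hf0]; simpa using hδ₁⟩
      rwa [Metric.mem_closedBall, dist_eq_norm] at this
    have hXsmall : ∀ x : X, ‖x‖ ≤ 1 → ‖x‖ ≤ 1/2 := by
      intro x hx
      have h1 := hXball x hx
      have h2 := hXball (-x) (by simpa using hx)
      have : ‖x - a - (-x - a)‖ ≤ ε₁ + ε₁ := by
        calc ‖x - a - (-x - a)‖ ≤ ‖x - a‖ + ‖-x - a‖ := norm_sub_le _ _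
          _ ≤ ε₁ + ε₁ := add_le_add h1 h2
      have heq : x - a - (-x - a) = (2:ℝ) • x := by module
      rw [heq, norm_smul] at this
      simp only [Real.norm_ofNat] at this
      have : ε₁ ≤ 1/2 := min_le_right _ _
      nlinarith [hXball x hx, hXball (-x) (by simpa using hx)]
    have htriv := my_small_ball_trivial hXsmall
    have ha0 : a = 0 := htriv a ha1
    have hZball : ∀ z : Z, ‖z‖ ≤ 1 → z = t a b := by
      intro z hz
      have hz' : z ∈ closure (convexHull ℝ S) := by rw [← hball]; exact hz
      have hSsub : S ⊆ {(0 : Z)} := by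
        rintro z ⟨x, y, hx, hy, rfl⟩
        have : x = 0 := htriv x hx
        simp [this]
      have : closure (convexHull ℝ S) ⊆ {(0:Z)} := by
        refine closure_minimal (convexHull_min hSsub (convex_singleton 0)) isClosed_singleton
      have hz0 : z = 0 := this hz'
      rw [hz0, ha0]
      simp
    refine ⟨0, 1, one_pos, fun z hz => ?_⟩
    rw [Metric.mem_closedBall, dist_eq_norm, hZball z hz.1]
    simp
    linarith
  by_cases hg : ‖g‖ = 0
  · have hg0 : g = 0 := by rwa [norm_eq_zero] at hg
    have hYball : ∀ y : Y, ‖y‖ ≤ 1 → ‖y - b‖ ≤ ε₁ := by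
      intro y hy
      have := hgs ⟨hy, by rw [hg0]; simpa using hδ₂⟩
      rwa [Metric.mem_closedBall, dist_eq_norm] at this
    have hYsmall : ∀ y : Y, ‖y‖ ≤ 1 → ‖y‖ ≤ 1/2 := by
      intro y hy
      have h1 := hYball y hy
      have h2 := hYball (-y) (by simpa using hy)
      have h3 : ‖y - b - (-y - b)‖ ≤ ε₁ + ε₁ := by
        calc ‖y - b - (-y - b)‖ ≤ ‖y - b‖ + ‖-y - b‖ := norm_sub_le _ _
          _ ≤ ε₁ + ε₁ := add_le_add h1 h2
      have heq : y - b - (-y - b) = (2:ℝ) • y := by module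
      rw [heq, norm_smul] at h3
      simp only [Real.norm_ofNat] at h3
      have : ε₁ ≤ 1/2 := min_le_right _ _
      nlinarith
    have htriv := my_small_ball_trivial hYsmall
    have hb0 : b = 0 := htriv b hb1
    have hZball : ∀ z : Z, ‖z‖ ≤ 1 → z = t a b := by
      intro z hz
      have hz' : z ∈ closure (convexHull ℝ S) := by rw [← hball]; exact hz
      have hSsub : S ⊆ {(0 : Z)} := by
        rintro z ⟨x, y, hx, hy, rfl⟩
        have : y = 0 := htriv y hy
        simp [this]
      have : closure (convexHull ℝ S) ⊆ {(0:Z)} :=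
        closure_minimal (convexHull_min hSsub (convex_singleton 0)) isClosed_singleton
      have hz0 : z = 0 := this hz'
      rw [hz0, hb0]
      simp
    refine ⟨0, 1, one_pos, fun z hz => ?_⟩
    rw [Metric.mem_closedBall, dist_eq_norm, hZball z hz.1]
    simp
    linarith
  -- main case
  have hfpos : 0 < ‖f‖ := lt_of_le_of_ne (norm_nonneg f) (Ne.symm hf)
  have hgpos : 0 < ‖g‖ := lt_of_le_of_ne (norm_nonneg g) (Ne.symm hg)
  obtain ⟨φ, hφn, hφe⟩ := hdual f g
  set δ' : ℝ := min (δ₁ * ‖g‖) (min (δ₂ * ‖f‖) (‖f‖ * ‖g‖)) / 2 with hδ'def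
  have hδ'pos : 0 < δ' := by
    apply div_pos _ two_pos
    exact lt_min (by positivity) (lt_min (by positivity) (by positivity))
  have hδ'1 : δ' < δ₁ * ‖g‖ := by
    have := min_le_left (δ₁ * ‖g‖) (min (δ₂ * ‖f‖) (‖f‖ * ‖g‖))
    have h2 : 0 < δ₁ * ‖g‖ := by positivity
    rw [hδ'def]; linarith
  have hδ'2 : δ' < δ₂ * ‖f‖ := by
    have h1 := min_le_right (δ₁ * ‖g‖) (min (δ₂ * ‖f‖) (‖f‖ * ‖g‖))
    have h2 := min_le_left (δ₂ * ‖f‖) (‖f‖ * ‖g‖)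
    have h3 : 0 < δ₂ * ‖f‖ := by positivity
    rw [hδ'def]; linarith
  have hδ'3 : δ' < ‖f‖ * ‖g‖ := by
    have h1 := min_le_right (δ₁ * ‖g‖) (min (δ₂ * ‖f‖) (‖f‖ * ‖g‖))
    have h2 := min_le_right (δ₂ * ‖f‖) (‖f‖ * ‖g‖)
    have h3 : 0 < ‖f‖ * ‖g‖ := by positivity
    rw [hδ'def]; linarith
  set C : ℝ := 2 / δ' with hCdef
  have hCpos : 0 < C := by positivity
  -- key estimate for elementary tensors in the "good" region
  have keygood : ∀ (x : X) (y : Y), ‖x‖ ≤ 1 → ‖y‖ ≤ 1 → 0 < g y →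
      f x * g y > ‖f‖ * ‖g‖ - δ' → ‖t x y - t a b‖ ≤ ε / 2 := by
    intro x y hx hy hgy hprod
    have hfx : 0 < f x := by
      rcases lt_trichotomy (f x) 0 with h | h | h
      · nlinarith
      · nlinarith
      · exact h
    have hfxle : f x ≤ ‖f‖ := by
      have := f.le_opNorm x
      have h2 : ‖f x‖ ≤ ‖f‖ := by
        calc ‖f x‖ ≤ ‖f‖ * ‖x‖ := f.le_opNorm x
          _ ≤ ‖f‖ * 1 := by nlinarith [norm_nonneg f]
          _ = ‖f‖ := mul_one _
      calc f x ≤ ‖f x‖ := le_abs_self _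
        _ ≤ ‖f‖ := h2
    have hgyle : g y ≤ ‖g‖ := by
      have h2 : ‖g y‖ ≤ ‖g‖ := by
        calc ‖g y‖ ≤ ‖g‖ * ‖y‖ := g.le_opNorm y
          _ ≤ ‖g‖ * 1 := by nlinarith [norm_nonneg g]
          _ = ‖g‖ := mul_one _
      calc g y ≤ ‖g y‖ := le_abs_self _
        _ ≤ ‖g‖ := h2
    have hfxslice : f x > ‖f‖ - δ₁ := by nlinarith
    have hgyslice : g y > ‖g‖ - δ₂ := by nlinarith
    have hxa : ‖x - a‖ ≤ ε₁ := by
      have := hfs ⟨hx, hfxslice⟩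
      rwa [Metric.mem_closedBall, dist_eq_norm] at this
    have hyb : ‖y - b‖ ≤ ε₁ := by
      have := hgs ⟨hy, hgyslice⟩
      rwa [Metric.mem_closedBall, dist_eq_norm] at this
    have hsplit : t x y - t a b = t (x - a) y + t a (y - b) := by
      simp only [map_sub, ContinuousLinearMap.sub_apply]
      abel
    rw [hsplit]
    have hε₁4 : ε₁ ≤ ε / 4 := min_le_left _ _
    calc ‖t (x - a) y + t a (y - b)‖ ≤ ‖t (x - a) y‖ + ‖t a (y - b)‖ := norm_add_le _ _
      _ = ‖x - a‖ * ‖y‖ + ‖a‖ * ‖y - b‖ := by rw [htnorm, htnorm]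
      _ ≤ ε₁ * 1 + 1 * ε₁ := by
          gcongr <;> first | exact norm_nonneg _ | assumption
      _ ≤ ε / 4 + ε / 4 := by simpa using add_le_add hε₁4 hε₁4
      _ = ε / 2 := by ring
  -- pointwise bound on S
  have keyS : ∀ u ∈ S, ‖u - t a b‖ + C * φ u ≤ ε / 2 + C * ‖φ‖ := by
    rintro u ⟨x, y, hx, hy, rfl⟩
    have hφu : φ (t x y) = f x * g y := hφe x y
    have hφub : φ (t x y) ≤ ‖φ‖ := by
      rw [hφu, hφn]
      have h1 : ‖f x‖ ≤ ‖f‖ := by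
        calc ‖f x‖ ≤ ‖f‖ * ‖x‖ := f.le_opNorm x
          _ ≤ ‖f‖ * 1 := by nlinarith [norm_nonneg f]
          _ = ‖f‖ := mul_one _
      have h2 : ‖g y‖ ≤ ‖g‖ := by
        calc ‖g y‖ ≤ ‖g‖ * ‖y‖ := g.le_opNorm y
          _ ≤ ‖g‖ * 1 := by nlinarith [norm_nonneg g]
          _ = ‖g‖ := mul_one _
      calc f x * g y ≤ ‖f x * g y‖ := le_abs_self _
        _ = ‖f x‖ * ‖g y‖ := abs_mul _ _
        _ ≤ ‖f‖ * ‖g‖ := by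
            apply mul_le_mul h1 h2 (norm_nonneg _) (norm_nonneg _)
    by_cases hcase : φ (t x y) > ‖φ‖ - δ'
    · -- good tensor
      have hprod : f x * g y > ‖f‖ * ‖g‖ - δ' := by rw [← hφu, ← hφn]; exact hcase
      have hgy0 : g y ≠ 0 := by
        intro h0
        rw [h0, mul_zero] at hprod
        nlinarith
      have hnorm : ‖t x y - t a b‖ ≤ ε / 2 := by
        rcases hgy0.lt_or_gt with hneg | hpos
        · have h1 : 0 < g (-y) := by simp only [map_neg]; linarith
          have h2 : f (-x) * g (-y) > ‖f‖ * ‖g‖ - δ' := by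
            simp only [map_neg]
            nlinarith
          have h3 := keygood (-x) (-y) (by simpa using hx) (by simpa using hy) h1 h2
          have h4 : t (-x) (-y) = t x y := by simp
          rwa [h4] at h3
        · exact keygood x y hx hy hpos hprod
      nlinarith
    · -- bad tensor
      push_neg at hcase
      have hnorm : ‖t x y - t a b‖ ≤ 2 := by
        calc ‖t x y - t a b‖ ≤ ‖t x y‖ + ‖t a b‖ := norm_sub_le _ _
          _ ≤ 1 + 1 := by
              apply add_le_add _ htab
              rw [htnorm]
              exact mul_le_one₀ hx (norm_nonneg y) hy
          _ = 2 := by norm_num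
      have hC : C * (‖φ‖ - φ (t x y)) ≥ 2 := by
        have h1 : ‖φ‖ - φ (t x y) ≥ δ' := by linarith
        calc C * (‖φ‖ - φ (t x y)) ≥ C * δ' := by
              exact mul_le_mul_of_nonneg_left h1 (le_of_lt hCpos)
          _ = 2 := by rw [hCdef]; exact div_mul_cancel₀ 2 (ne_of_gt hδ'pos)
      nlinarith
  -- the set K is convex and closed and contains S, hence the unit ball
  set K : Set Z := {u : Z | ‖u - t a b‖ + C * φ u ≤ ε / 2 + C * ‖φ‖} with hKdef
  have hKconv : Convex ℝ K := by
    intro u hu v hv α β hα hβ hαβ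
    simp only [hKdef, Set.mem_setOf_eq] at hu hv ⊢
    have heq : α • u + β • v - t a b = α • (u - t a b) + β • (v - t a b) := by
      have h : α • (u - t a b) + β • (v - t a b)
          = α • u + β • v - (α + β) • t a b := by module
      rw [h, hαβ, one_smul]
    have hnorm : ‖α • u + β • v - t a b‖ ≤ α * ‖u - t a b‖ + β * ‖v - t a b‖ := by
      rw [heq]
      calc ‖α • (u - t a b) + β • (v - t a b)‖ ≤ ‖α • (u - t a b)‖ + ‖β • (v - t a b)‖ :=
            norm_add_le _ _
        _ = α * ‖u - t a b‖ + β * ‖v - t a b‖ := by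
            rw [norm_smul, norm_smul, Real.norm_eq_abs, Real.norm_eq_abs,
              abs_of_nonneg hα, abs_of_nonneg hβ]
    have hφlin : φ (α • u + β • v) = α * φ u + β * φ v := by
      simp [map_add, map_smul]
    calc ‖α • u + β • v - t a b‖ + C * φ (α • u + β • v)
        ≤ (α * ‖u - t a b‖ + β * ‖v - t a b‖) + C * (α * φ u + β * φ v) := by
          rw [hφlin]; linarith
      _ = α * (‖u - t a b‖ + C * φ u) + β * (‖v - t a b‖ + C * φ v) := by ring
      _ ≤ α * (ε / 2 + C * ‖φ‖) + β * (ε / 2 + C * ‖φ‖) :=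
          add_le_add (mul_le_mul_of_nonneg_left hu hα) (mul_le_mul_of_nonneg_left hv hβ)
      _ = ε / 2 + C * ‖φ‖ := by rw [← add_mul, hαβ, one_mul]
  have hKclosed : IsClosed K := by
    have hcont : Continuous fun u : Z => ‖u - t a b‖ + C * φ u := by
      apply Continuous.add
      · exact (continuous_id.sub continuous_const).norm
      · exact continuous_const.mul φ.continuous
    exact isClosed_le hcont continuous_const
  have hSK : S ⊆ K := keyS
  have hballK : {z : Z | ‖z‖ ≤ 1} ⊆ K := by
    rw [hball]
    exact closure_minimal (convexHull_min hSK hKconv) hKclosed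
  -- final slice
  refine ⟨φ, ε * δ' / 8, by positivity, fun z hz => ?_⟩
  obtain ⟨hz1, hz2⟩ := hz
  have hzK : z ∈ K := hballK hz1
  simp only [hKdef, Set.mem_setOf_eq] at hzK
  rw [Metric.mem_closedBall, dist_eq_norm]
  have hδ'ne : δ' ≠ 0 := ne_of_gt hδ'pos
  have hCδ : C * (ε * δ' / 8) = ε / 4 := by
    rw [hCdef]; field_simp; ring
  nlinarith [hzK, hz2]


/-- Let `Z` be (an abstract realization of) the projective tensor product `X ⊗̂_π Y`:
there is a bilinear map `t : X → Y → Z` with `‖t x y‖ = ‖x‖ ‖y‖` (the projective norm is a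
cross norm), the closed unit ball of `Z` is the closed convex hull of
`B_X ⊗ B_Y = {t x y : ‖x‖ ≤ 1, ‖y‖ ≤ 1}`, and for all `f ∈ X*`, `g ∈ Y*` the functional
`f ⊗ g` (satisfying `(f ⊗ g)(t x y) = f x · g y` and `‖f ⊗ g‖ = ‖f‖ ‖g‖`) exists on `Z`.
If `a` is a semi denting point of `B_X` and `b` is a semi denting point of `B_Y`, then
`a ⊗ b = t a b` is a semi denting point of `B_{X ⊗̂_π Y}`. -/
theorem isSemiDentingPointOfBall_tensor
    {X Y Z : Type*} [NormedAddCommGroup X] [NormedSpace ℝ X] [CompleteSpace X]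
    [NormedAddCommGroup Y] [NormedSpace ℝ Y] [CompleteSpace Y]
    [NormedAddCommGroup Z] [NormedSpace ℝ Z] [CompleteSpace Z]
    (t : X →L[ℝ] Y →L[ℝ] Z)
    (htnorm : ∀ (x : X) (y : Y), ‖t x y‖ = ‖x‖ * ‖y‖)
    (hball : {z : Z | ‖z‖ ≤ 1} =
      closure (convexHull ℝ {z : Z | ∃ (x : X) (y : Y), ‖x‖ ≤ 1 ∧ ‖y‖ ≤ 1 ∧ z = t x y}))
    (hdual : ∀ (f : X →L[ℝ] ℝ) (g : Y →L[ℝ] ℝ), ∃ φ : Z →L[ℝ] ℝ,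
      ‖φ‖ = ‖f‖ * ‖g‖ ∧ ∀ (x : X) (y : Y), φ (t x y) = f x * g y)
    (a : X) (b : Y)
    (ha : IsSemiDentingPointOfBall a) (hb : IsSemiDentingPointOfBall b) :
    IsSemiDentingPointOfBall (t a b) :=
  isSemiDentingPointOfBall_tensor' t htnorm hball hdual a b ha hb
end
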